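/- In Ā[r] the identity η_R(a_3^3 + 3a_2a_3a_4) − (a_3^3 + 3a_2a_3a_4) = −a_2^2·(a_2r^3 + a_3r^2 + a_4r) holds, where η_R is applied multiplicatively to products of the a_i. -/

import Mathlib

/-!
`Abar = 𝔽_5[a_2,a_3,a_4]` (the variable `0,1,2 : Fin 3` are `a_2, a_3, a_4`),
`q(t) = t^5 + a_2t^3 + a_3t^2 + a_4t`, and `etaR : Abar → Abar[r]` is the
𝔽_5-algebra map sending `a_i` to the coefficient of `x^{5-i}` in `q(x+r) - q(r)`,
computed in `Abar[r][x]`.  This is the reduction modulo `(5, a_1, a_5)` of the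
Gorbounov–Hopkins–Mahowald Hopf algebroid at the prime `5`.
-/

/-- The ring `Ā = 𝔽_5[a_2,a_3,a_4]`. -/
abbrev Abar : Type := MvPolynomial (Fin 3) (ZMod 5)

/-- The generator `a_2`. -/
noncomputable def a2 : Abar := MvPolynomial.X 0
/-- The generator `a_3`. -/
noncomputable def a3 : Abar := MvPolynomial.X 1
/-- The generator `a_4`. -/
noncomputable def a4 : Abar := MvPolynomial.X 2

/-- The polynomial `q(t) = t^5 + a_2t^3 + a_3t^2 + a_4t` as an element of `Ā[t]`. -/
noncomputable def q : Polynomial Abar :=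
  Polynomial.X ^ 5 + Polynomial.C a2 * Polynomial.X ^ 3 + Polynomial.C a3 * Polynomial.X ^ 2 +
    Polynomial.C a4 * Polynomial.X

/-- `q(x+r) - q(r)`, an element of `Ā[r][x]` (the inner variable is `r`, the outer is `x`). -/
noncomputable def qShift : Polynomial (Polynomial Abar) :=
  Polynomial.eval₂ (Polynomial.C.comp Polynomial.C)
      (Polynomial.X + Polynomial.C Polynomial.X) q -
    Polynomial.eval₂ (Polynomial.C.comp Polynomial.C) (Polynomial.C Polynomial.X) q

/-- The right unit `η_R : Ā → Ā[r]`, sending `a_i` (for `i = 2,3,4`) to the coefficient of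
`x^{5-i}` in `q(x+r) - q(r)`. -/
noncomputable def etaR : Abar →ₐ[ZMod 5] Polynomial Abar :=
  MvPolynomial.aeval (fun k : Fin 3 => qShift.coeff (3 - k.1))

/-!
In characteristic `5` the middle binomial coefficients of `(x + r)⁵` vanish, so `q(x + r) - q(r)`
has `x`-coefficients `a₂`, `a₃ + 3a₂r`, `a₄ + 2a₃r + 3a₂r²`. Substituting these into
`a₃³ + 3a₂a₃a₄` gives the claimed difference up to multiples of `5`.
-/

open Polynomial

theorem quintic_shift_sub_of_charP_five {S : Type*} [CommRing S] [CharP S 5]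
    (a₂ a₃ a₄ r x : S) :
    (x + r) ^ 5 + a₂ * (x + r) ^ 3 + a₃ * (x + r) ^ 2 + a₄ * (x + r) -
        (r ^ 5 + a₂ * r ^ 3 + a₃ * r ^ 2 + a₄ * r) =
      x ^ 5 + a₂ * x ^ 3 + (a₃ + 3 * a₂ * r) * x ^ 2 + (a₄ + 2 * a₃ * r + 3 * a₂ * r ^ 2) * x := by
  linear_combination (r * x ^ 4 + 2 * r ^ 2 * x ^ 3 + 2 * r ^ 3 * x ^ 2 + r ^ 4 * x) *
    CharP.cast_eq_zero S 5

theorem cube_add_three_mul_shift_sub_of_charP_five {R : Type*} [CommRing R] [CharP R 5]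
    (a₂ a₃ a₄ r : R) :
    (a₃ + 3 * a₂ * r) ^ 3 + 3 * a₂ * (a₃ + 3 * a₂ * r) * (a₄ + 2 * a₃ * r + 3 * a₂ * r ^ 2) -
        (a₃ ^ 3 + 3 * a₂ * a₃ * a₄) =
      -a₂ ^ 2 * (a₂ * r ^ 3 + a₃ * r ^ 2 + a₄ * r) := by
  linear_combination ((3 * a₂ * a₃ ^ 2 + 2 * a₂ ^ 2 * a₄) * r + 11 * a₂ ^ 2 * a₃ * r ^ 2 +
    11 * a₂ ^ 3 * r ^ 3) * CharP.cast_eq_zero R 5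

-- The multiplication of `Abar` is found through `AddMonoidAlgebra`, so `eval₂_mul` does not
-- match syntactically; `eval₂_mul_noncomm` with an explicit commutativity proof does.
theorem eval₂_q (y : Abar[X][X]) :
    eval₂ (C.comp C) y q = y ^ 5 + C (C a2) * y ^ 3 + C (C a3) * y ^ 2 + C (C a4) * y := by
  simp [q, eval₂_mul_noncomm, Commute.all (S := Abar[X][X])]

theorem qShift_eq :
    qShift = X ^ 5 + C (C a2) * X ^ 3 + C (C a3 + 3 * C a2 * X) * X ^ 2 +
      C (C a4 + 2 * C a3 * X + 3 * C a2 * X ^ 2) * X := by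
  rw [qShift, eval₂_q, eval₂_q]
  simp only [map_add, map_mul, map_pow, map_ofNat]
  exact quintic_shift_sub_of_charP_five (S := Abar[X][X]) _ _ _ _ _

theorem etaR_X (k : Fin 3) : etaR (MvPolynomial.X k) = qShift.coeff (3 - k.1) :=
  MvPolynomial.aeval_X _ _

theorem etaR_a2 : etaR a2 = C a2 := by
  refine (etaR_X 0).trans ?_
  rw [qShift_eq]
  simp only [coeff_add, coeff_C_mul_X_pow, coeff_C_mul_X, coeff_X_pow]
  norm_num

theorem etaR_a3 : etaR a3 = C a3 + 3 * C a2 * X := by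
  refine (etaR_X 1).trans ?_
  rw [qShift_eq]
  simp only [coeff_add, coeff_C_mul_X_pow, coeff_C_mul_X, coeff_X_pow]
  norm_num

theorem etaR_a4 : etaR a4 = C a4 + 2 * C a3 * X + 3 * C a2 * X ^ 2 := by
  refine (etaR_X 2).trans ?_
  rw [qShift_eq]
  simp only [coeff_add, coeff_C_mul_X_pow, coeff_C_mul_X, coeff_X_pow]
  norm_num

/-- `η_R(a_3³ + 3a_2a_3a_4) − (a_3³ + 3a_2a_3a_4) = −a_2²·(a_2r³ + a_3r² + a_4r)` in `Ā[r]`. -/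
theorem coboundary_a33 :
    etaR (a3 ^ 3 + 3 * a2 * a3 * a4) - Polynomial.C (a3 ^ 3 + 3 * a2 * a3 * a4) =
      -Polynomial.C (a2 ^ 2) *
        (Polynomial.C a2 * Polynomial.X ^ 3 + Polynomial.C a3 * Polynomial.X ^ 2 +
          Polynomial.C a4 * Polynomial.X) := by
  simp only [map_add, map_mul, map_pow, map_ofNat, etaR_a2, etaR_a3, etaR_a4]
  exact cube_add_three_mul_shift_sub_of_charP_five _ _ _ _
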